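/- arXiv:2308.11738 — 2 statements merged into one kernel-verified Lean document; each statement's English description precedes it below -/
import Mathlib

section
/- For each m with 1 ≤ m ≤ n, the number of directed acyclic graphs on the labeled vertex set [n] in which every vertex in {1,...,m} has indegree zero equals 2^{m(n-m)} · a_{n-m}, where a_k is the number of DAGs on k labeled vertices. -/
/-! No edge enters a source, so no directed cycle passes through one: a relation without edges
into the sources is acyclic iff its restriction to the remaining vertices is. Such a DAG is
therefore a free choice of edges from the `m` sources to the other `n - m` vertices together with
an arbitrary DAG on those `n - m` vertices. -/

/-- A directed graph (relation) is a DAG if it has no directed cycle,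
i.e. its transitive closure is irreflexive. -/
def IsDag {V : Type*} (E : V → V → Prop) : Prop :=
  Irreflexive (Relation.TransGen E)

/-- The number of labeled DAGs on the vertex set `Fin n`. -/
noncomputable def numDag (n : ℕ) : ℕ :=
  Nat.card {E : Fin n → Fin n → Bool // IsDag (fun u v => E u v = true)}

theorem IsDag.comap {V W : Type*} {r : W → W → Prop} (h : IsDag r) (f : V → W) :
    IsDag fun a b => r (f a) (f b) :=
  fun a ha => h (f a) (ha.lift f fun _ _ hab => hab)

theorem Relation.TransGen.subtype_of_forall_target {V : Type*} {r : V → V → Prop}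
    {q : V → Prop} (hr : ∀ a b, r a b → q b) {a b : V} (h : Relation.TransGen r a b)
    (ha : q a) (hb : q b) :
    Relation.TransGen (fun x y : Subtype q => r x y) ⟨a, ha⟩ ⟨b, hb⟩ := by
  induction h using Relation.TransGen.head_induction_on with
  | single hab => exact .single hab
  | @head a c hac _ ih => exact .head (b := ⟨c, hr _ _ hac⟩) hac (ih _)

theorem isDag_iff_subtype_of_forall_target {V : Type*} {r : V → V → Prop}
    {q : V → Prop} (hr : ∀ a b, r a b → q b) :
    IsDag r ↔ IsDag fun x y : Subtype q => r x y := by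
  refine ⟨fun h => h.comap Subtype.val, fun h a ha => ?_⟩
  obtain ⟨_, _, hlast⟩ := Relation.TransGen.tail'_iff.mp ha
  have hqa := hr _ _ hlast
  exact h _ (ha.subtype_of_forall_target hr hqa hqa)

abbrev DagOn (V : Type*) := {E : V → V → Bool // IsDag fun u v => E u v = true}

def DagOn.congr {V W : Type*} (e : V ≃ W) : DagOn V ≃ DagOn W :=
  (e.arrowCongr (e.arrowCongr (Equiv.refl Bool))).subtypeEquiv fun E =>
    ⟨fun h => h.comap e.symm, fun h => by simpa using h.comap e⟩

section Sources

variable {V : Type*} (p : V → Prop) [DecidablePred p]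

def extendBySources (C : {u // p u} → {v // ¬p v} → Bool)
    (E : {v // ¬p v} → {v // ¬p v} → Bool) (u v : V) : Bool :=
  if hv : p v then false else if hu : p u then C ⟨u, hu⟩ ⟨v, hv⟩ else E ⟨u, hu⟩ ⟨v, hv⟩

theorem not_of_extendBySources_eq_true {C : {u // p u} → {v // ¬p v} → Bool}
    {E : {v // ¬p v} → {v // ¬p v} → Bool} {u v : V} (h : extendBySources p C E u v = true) :
    ¬p v := by
  intro hv
  simp [extendBySources, hv] at h

theorem isDag_extendBySources {C : {u // p u} → {v // ¬p v} → Bool}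
    {E : {v // ¬p v} → {v // ¬p v} → Bool} (hE : IsDag fun u v => E u v = true) :
    IsDag fun u v => extendBySources p C E u v = true := by
  refine (isDag_iff_subtype_of_forall_target
    fun _ _ h => not_of_extendBySources_eq_true p h).mpr ?_
  have hrestrict (x y : {v // ¬p v}) : extendBySources p C E x y = E x y := by
    simp [extendBySources, x.2, y.2]
  simpa only [hrestrict] using hE

def dagWithSourcesEquiv :
    {E : V → V → Bool // IsDag (fun u v => E u v = true) ∧ ∀ v, p v → ∀ u, E u v = false} ≃
      ({u // p u} → {v // ¬p v} → Bool) × DagOn {v // ¬p v} where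
  toFun E := (fun u v => E.1 u v, ⟨fun u v => E.1 u v, E.2.1.comap Subtype.val⟩)
  invFun CE := ⟨extendBySources p CE.1 CE.2.1, isDag_extendBySources p CE.2.2,
    fun v hv u => by simp [extendBySources, hv]⟩
  left_inv := by
    rintro ⟨E, -, hsrc⟩
    ext u v
    by_cases hv : p v
    · simp [extendBySources, hv, hsrc v hv u]
    · by_cases hu : p u <;> simp [extendBySources, hu, hv]
  right_inv := by
    rintro ⟨C, E, -⟩
    ext ⟨u, hu⟩ ⟨v, hv⟩ <;> simp [extendBySources, hu, hv]

theorem card_dagWithSources [Finite V] :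
    Nat.card {E : V → V → Bool // IsDag (fun u v => E u v = true) ∧ ∀ v, p v → ∀ u, E u v = false}
      = 2 ^ (Nat.card {u // p u} * Nat.card {v // ¬p v}) * Nat.card (DagOn {v // ¬p v}) := by
  rw [Nat.card_congr (dagWithSourcesEquiv p), Nat.card_prod, Nat.card_fun, Nat.card_fun,
    Nat.card_eq_fintype_card (α := Bool), Fintype.card_bool, ← pow_mul,
    mul_comm (Nat.card {v // ¬p v})]

end Sources

theorem Fin.card_subtype_val_lt {n m : ℕ} (h : m ≤ n) :
    Nat.card {v : Fin n // (v : ℕ) < m} = m := by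
  rw [Nat.card_eq_fintype_card, Fintype.card_subtype, Fin.card_filter_val_lt, min_eq_right h]

theorem Fin.card_subtype_not_val_lt {n m : ℕ} (h : m ≤ n) :
    Nat.card {v : Fin n // ¬(v : ℕ) < m} = n - m := by
  rw [Nat.card_eq_fintype_card, Fintype.card_subtype_compl, Fintype.card_fin,
    ← Nat.card_eq_fintype_card, Fin.card_subtype_val_lt h]

theorem stmt2_general (n m : ℕ) (h2 : m ≤ n) :
    Nat.card {E : Fin n → Fin n → Bool //
      IsDag (fun u v => E u v = true) ∧
      ∀ v : Fin n, (v : ℕ) < m → ∀ u : Fin n, E u v = false}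
      = 2 ^ (m * (n - m)) * numDag (n - m) := by
  have hcompl := Fin.card_subtype_not_val_lt h2
  rw [card_dagWithSources, Fin.card_subtype_val_lt h2, hcompl, numDag,
    Nat.card_congr (DagOn.congr (Finite.equivFinOfCardEq hcompl))]

theorem stmt2 (n m : ℕ) (h1 : 1 ≤ m) (h2 : m ≤ n) :
    Nat.card {E : Fin n → Fin n → Bool //
      IsDag (fun u v => E u v = true) ∧
      ∀ v : Fin n, (v : ℕ) < m → ∀ u : Fin n, E u v = false}
      = 2 ^ (m * (n - m)) * numDag (n - m) :=
  stmt2_general n m h2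
end

section
/- The total number of rooted simple graphs on n labeled vertices, n · 2^{C(n,2)}, equals Σ_{m=1}^{n} C(n,m) · m · c_m · 2^{C(n-m,2)}, where c_m is the number of connected graphs on m labeled vertices. -/
/-!
Root a graph at `v` and let `S` be the vertex set of the component of `v`. The graph is then
the same thing as a connected graph on `S` together with an arbitrary graph on the complement
of `S`, so for each fixed root `v`, `2 ^ C(n, 2) = ∑_{S ∋ v} c_|S| * 2 ^ C(n - |S|, 2)`.
Summing over the `n` roots counts every `S` exactly `|S|` times, and grouping the sets `S` by
size gives the binomial coefficients.
-/

/-- The number of connected simple graphs on the labeled vertex set `Fin n`. -/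
noncomputable def numConn (n : ℕ) : ℕ :=
  Nat.card {G : SimpleGraph (Fin n) // G.Connected}

open Finset

namespace SimpleGraph

variable {V : Type*}

def equivSetNotDiag : SimpleGraph V ≃ Set {e : Sym2 V // ¬ e.IsDiag} where
  toFun G := {e | e.1 ∈ G.edgeSet}
  invFun s := fromEdgeSet (Subtype.val '' s)
  left_inv G := by ext a b; simpa using G.ne_of_adj
  right_inv s := by ext ⟨e, he⟩; simp [he]

theorem natCard_eq_two_pow_choose [Finite V] :
    Nat.card (SimpleGraph V) = 2 ^ (Nat.card V).choose 2 := by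
  classical
  have := Fintype.ofFinite V
  rw [Nat.card_congr equivSetNotDiag, Nat.card_eq_fintype_card, Fintype.card_set,
    Sym2.card_subtype_not_diag, Nat.card_eq_fintype_card]

theorem natCard_connected_eq_numConn (W : Type*) [Finite W] :
    Nat.card {H : SimpleGraph W // H.Connected} = numConn (Nat.card W) :=
  Nat.card_congr <| Equiv.subtypeEquiv (Finite.equivFin W).simpleGraph fun _ =>
    Iso.connected_iff ⟨Finite.equivFin W, by simp⟩

def equivInduceProd (s : Set V) :
    {G : SimpleGraph V // ∀ a b, G.Adj a b → a ∈ s → b ∈ s} ≃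
      SimpleGraph s × SimpleGraph ↥sᶜ where
  toFun G := (G.1.induce s, G.1.induce sᶜ)
  invFun HK :=
    ⟨HK.1.map (Function.Embedding.subtype _) ⊔ HK.2.map (Function.Embedding.subtype _), by
      intro a b h ha
      simp only [sup_adj, map_adj] at h
      aesop⟩
  left_inv := by
    rintro ⟨G, hG⟩
    ext a b
    simp only [sup_adj, map_adj]
    by_cases ha : a ∈ s
    · simpa [ha] using hG a b
    · simpa [ha] using fun (hab : G.Adj a b) hb => ha (hG b a hab.symm hb)
  right_inv := by
    rintro ⟨H, K⟩
    ext ⟨a, ha⟩ ⟨b, hb⟩ <;> simp only [comap_adj, sup_adj, map_adj]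
    · simp [ha, hb]
    · simp [Set.notMem_of_mem_compl ha, Set.notMem_of_mem_compl hb]

variable {G : SimpleGraph V} {s : Set V} {u v w : V}

theorem Reachable.mem_of_adj_closed (hs : ∀ a b, G.Adj a b → a ∈ s → b ∈ s)
    (h : G.Reachable u w) (hu : u ∈ s) : w ∈ s := by
  obtain ⟨p⟩ := h
  induction p with
  | nil => exact hu
  | cons hadj _ ih => exact ih (hs _ _ hadj hu)

theorem connectedComponentMk_supp_eq_iff (hv : v ∈ s) :
    (G.connectedComponentMk v).supp = s ↔
      (G.induce s).Connected ∧ ∀ a b, G.Adj a b → a ∈ s → b ∈ s := by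
  constructor
  · rintro rfl
    exact ⟨ConnectedComponent.connected_toSimpleGraph _,
      fun a b hab ha => ConnectedComponent.mem_supp_of_adj_mem_supp _ ha hab⟩
  · rintro ⟨hconn, hs⟩
    ext w
    rw [ConnectedComponent.mem_supp_iff, ConnectedComponent.eq]
    refine ⟨fun h => h.symm.mem_of_adj_closed hs hv, fun hw => ?_⟩
    exact (hconn.preconnected ⟨w, hw⟩ ⟨v, hv⟩).map (Embedding.induce s).toHom

theorem natCard_connectedComponentMk_supp_eq (hv : v ∈ s) :
    Nat.card {G : SimpleGraph V // (G.connectedComponentMk v).supp = s} =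
      Nat.card {H : SimpleGraph s // H.Connected} * Nat.card (SimpleGraph ↥sᶜ) := by
  rw [← Nat.card_prod]
  exact Nat.card_congr <|
    (Equiv.subtypeEquivRight fun G => (connectedComponentMk_supp_eq_iff hv).trans and_comm).trans <|
    (Equiv.subtypeSubtypeEquivSubtypeInter _ _).symm.trans <|
    ((equivInduceProd s).subtypeEquiv fun _ => Iff.rfl).trans Equiv.prodSubtypeFstEquivSubtypeProd

theorem natCard_connectedComponentMk_supp_eq_finset [Fintype V] {S : Finset V} (hv : v ∈ S) :
    Nat.card {G : SimpleGraph V // (G.connectedComponentMk v).supp = S} =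
      numConn #S * 2 ^ ((Fintype.card V - #S).choose 2) := by
  rw [natCard_connectedComponentMk_supp_eq hv, natCard_connected_eq_numConn,
    natCard_eq_two_pow_choose, Nat.card_coe_set_eq, Nat.card_coe_set_eq, Set.ncard_compl,
    Set.ncard_coe_finset, Nat.card_eq_fintype_card]

theorem natCard_eq_sum_filter_mem [Fintype V] [DecidableEq V] (v : V) :
    Nat.card (SimpleGraph V) =
      ∑ S : Finset V with v ∈ S, numConn #S * 2 ^ ((Fintype.card V - #S).choose 2) := by
  classical
  calc Nat.card (SimpleGraph V)
      = Nat.card (Σ S : Finset V,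
          {G : SimpleGraph V // (G.connectedComponentMk v).supp.toFinset = S}) :=
        Nat.card_congr (Equiv.sigmaFiberEquiv _).symm
    _ = ∑ S : Finset V, Nat.card {G : SimpleGraph V // (G.connectedComponentMk v).supp = S} := by
        rw [Nat.card_sigma]
        refine sum_congr rfl fun S _ => Nat.card_congr <| Equiv.subtypeEquivRight fun G => ?_
        rw [← coe_inj, Set.coe_toFinset]
    _ = _ := by
        rw [sum_filter]
        refine sum_congr rfl fun S _ => ?_
        split_ifs with hv
        · exact natCard_connectedComponentMk_supp_eq_finset hv
        · have : IsEmpty {G : SimpleGraph V // (G.connectedComponentMk v).supp = S} :=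
            ⟨fun G => hv <| mem_coe.1 <| G.2 ▸ ConnectedComponent.connectedComponentMk_mem⟩
          exact Nat.card_of_isEmpty

theorem card_mul_two_pow_choose_eq_sum [Fintype V] :
    Fintype.card V * 2 ^ (Fintype.card V).choose 2 =
      ∑ S : Finset V, #S * numConn #S * 2 ^ ((Fintype.card V - #S).choose 2) := by
  classical
  calc Fintype.card V * 2 ^ (Fintype.card V).choose 2
      = ∑ v : V, ∑ S : Finset V with v ∈ S,
          numConn #S * 2 ^ ((Fintype.card V - #S).choose 2) := by
        simp_rw [← natCard_eq_sum_filter_mem, natCard_eq_two_pow_choose, sum_const, card_univ,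
          Nat.card_eq_fintype_card, smul_eq_mul]
    _ = ∑ S : Finset V, ∑ v ∈ S, numConn #S * 2 ^ ((Fintype.card V - #S).choose 2) :=
        sum_comm' (by simp)
    _ = _ := by simp_rw [sum_const, smul_eq_mul, mul_assoc]

end SimpleGraph

theorem stmt5 (n : ℕ) :
    n * 2 ^ n.choose 2 = ∑ m ∈ Finset.Icc 1 n,
      n.choose m * m * numConn m * 2 ^ ((n - m).choose 2) := by
  have h := SimpleGraph.card_mul_two_pow_choose_eq_sum (V := Fin n)
  rw [Fintype.card_fin, ← powerset_univ,
    sum_powerset_apply_card (fun m => m * numConn m * 2 ^ ((n - m).choose 2)), card_univ,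
    Fintype.card_fin] at h
  rw [h, range_eq_Ico, sum_eq_sum_Ico_succ_bot (by omega : 0 < n + 1), Ico_add_one_right_eq_Icc]
  simp only [smul_eq_mul, mul_assoc, zero_mul, mul_zero, zero_add]
end
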